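/- Two subsets S', S of {1,...,n} with S' ≤ S (in the componentwise partial order on equal-size subsets) correspond to a unique f in B_n with D(f) = S and R(f) = S'; consequently, for a k-subset S, the cyclic module B_n·v_S equals the span of all basis vectors v_{S'} with S' a k-subset satisfying S' ≤ S. -/
import Mathlib


open Finset

/-- `f : Fin n → Option (Fin n)` represents an injective partial map of `{1,…,n}`
(elements 0-indexed): `f a = some x` means `a ∈ D(f)` with image `x`. Injectivity: -/
def IsPartialInj {n : ℕ} (f : Fin n → Option (Fin n)) : Prop :=
  ∀ a b x, f a = some x → f b = some x → a = b

/-- order preserving: `a < b` in the domain implies `f a < f b`. -/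
def IsOrderPres {n : ℕ} (f : Fin n → Option (Fin n)) : Prop :=
  ∀ a b x y, a < b → f a = some x → f b = some y → x < y

/-- order decreasing: `f a ≤ a` on the domain. -/
def IsOrderDec {n : ℕ} (f : Fin n → Option (Fin n)) : Prop :=
  ∀ a x, f a = some x → x ≤ a

/-- The planar upper triangular rook monoid `B_n`: order-preserving,
order-decreasing injective partial maps of `{1,…,n}`. -/
def Bn (n : ℕ) : Set (Fin n → Option (Fin n)) :=
  {f | IsPartialInj f ∧ IsOrderPres f ∧ IsOrderDec f}

/-- domain of the partial map. -/
def domf {n : ℕ} (f : Fin n → Option (Fin n)) : Finset (Fin n) :=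
  Finset.univ.filter (fun a => (f a).isSome)

/-- image of a finite set under the partial map. -/
def fimg {n : ℕ} (f : Fin n → Option (Fin n)) (S : Finset (Fin n)) : Finset (Fin n) :=
  S.biUnion (fun a => (f a).toFinset)

/-- the linear action of a partial map `f` on `V = ⊕_{S ⊆ n} F·v_S`:
`f · v_S = v_{f(S)}` if `S ⊆ D(f)`, and `0` otherwise. -/
noncomputable def actMap (F : Type*) [Field F] {n : ℕ} (f : Fin n → Option (Fin n)) :
    (Finset (Fin n) →₀ F) →ₗ[F] (Finset (Fin n) →₀ F) :=
  Finsupp.lsum F (fun S => if S ⊆ domf f then Finsupp.lsingle (fimg f S) else 0)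

/-- a subspace `W` of `V` is a `B_n`-submodule if it is invariant under the action. -/
def IsBnSub {n : ℕ} {F : Type*} [Field F] (W : Submodule F (Finset (Fin n) →₀ F)) : Prop :=
  ∀ f ∈ Bn n, ∀ v ∈ W, actMap F f v ∈ W

/-- the `B_n`-submodule of `V` generated by a vector `v`. -/
noncomputable def genMod (F : Type*) [Field F] {n : ℕ} (v : Finset (Fin n) →₀ F) :
    Submodule F (Finset (Fin n) →₀ F) :=
  sInf {W | IsBnSub W ∧ v ∈ W}

/-- the componentwise partial order on subsets of `{1,…,n}`: `T ≤ S` iff `|T| = |S|`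
and `t_i ≤ s_i` for all `i` where both are listed increasingly. -/
def subLE {n : ℕ} (T S : Finset (Fin n)) : Prop :=
  T.card = S.card ∧ ∀ (i : ℕ) (hT : i < T.card) (hS : i < S.card),
    ((T.orderIsoOfFin rfl ⟨i, hT⟩ : T) : Fin n) ≤ ((S.orderIsoOfFin rfl ⟨i, hS⟩ : S) : Fin n)

-- AUX START
section Aux
variable {n : ℕ}

lemma orderEmbOfFin_eq_of_card (T : Finset (Fin n)) {k : ℕ} (hk : T.card = k)
    (i : ℕ) (h1 : i < k) (h2 : i < T.card) :
    T.orderEmbOfFin hk ⟨i, h1⟩ = T.orderEmbOfFin rfl ⟨i, h2⟩ := rfl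

lemma subLE_iff {T S : Finset (Fin n)} : subLE T S ↔ T.card = S.card ∧
    ∀ (i : ℕ) (hT : i < T.card) (hS : i < S.card),
      T.orderEmbOfFin rfl ⟨i, hT⟩ ≤ S.orderEmbOfFin rfl ⟨i, hS⟩ := Iff.rfl

lemma subLE_refl (S : Finset (Fin n)) : subLE S S := ⟨rfl, fun i h1 h2 => le_refl _⟩

lemma subLE_trans {A B C : Finset (Fin n)} (h1 : subLE A B) (h2 : subLE B C) : subLE A C := by
  refine ⟨h1.1.trans h2.1, fun i hA hC => ?_⟩
  have hB : i < B.card := by rw [← h1.1]; exact hA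
  exact le_trans (h1.2 i hA hB) (h2.2 i hB hC)

lemma mem_fimg {f : Fin n → Option (Fin n)} {T : Finset (Fin n)} {x : Fin n} :
    x ∈ fimg f T ↔ ∃ a ∈ T, f a = some x := by
  simp [fimg, Option.mem_toFinset, eq_comm]

/-- the canonical map sending the i-th element of S to the i-th element of S'. -/
noncomputable def mkf (S S' : Finset (Fin n)) (hc : S'.card = S.card) : Fin n → Option (Fin n) :=
  fun a => if h : a ∈ S then some (S'.orderEmbOfFin hc ((S.orderIsoOfFin rfl).symm ⟨a, h⟩))
    else none

lemma mkf_apply_mem (S S' : Finset (Fin n)) (hc : S'.card = S.card) (i : Fin S.card) :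
    mkf S S' hc (S.orderEmbOfFin rfl i) = some (S'.orderEmbOfFin hc i) := by
  have hm : S.orderEmbOfFin rfl i ∈ S := S.orderEmbOfFin_mem rfl i
  rw [mkf, dif_pos hm]
  congr 1
  have : (S.orderIsoOfFin rfl).symm ⟨S.orderEmbOfFin rfl i, hm⟩ = i := by
    rw [OrderIso.symm_apply_eq]
    exact Subtype.ext (S.coe_orderIsoOfFin_apply rfl i).symm
  rw [this]

lemma domf_mkf (S S' : Finset (Fin n)) (hc : S'.card = S.card) : domf (mkf S S' hc) = S := by
  ext a
  by_cases h : a ∈ S <;> simp [domf, mkf, h]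

lemma index_spec (S : Finset (Fin n)) {a : Fin n} (h : a ∈ S) :
    S.orderEmbOfFin rfl ((S.orderIsoOfFin rfl).symm ⟨a, h⟩) = a := by
  rw [← S.coe_orderIsoOfFin_apply rfl, OrderIso.apply_symm_apply]

lemma mkf_mem_Bn {S S' : Finset (Fin n)} (hc : S'.card = S.card) (hle : subLE S' S) :
    mkf S S' hc ∈ Bn n := by
  refine ⟨?_, ?_, ?_⟩
  · intro a b x ha hb
    rw [mkf] at ha hb
    split_ifs at ha hb with h1 h2
    rw [Option.some_inj] at ha hb
    have := (S'.orderEmbOfFin hc).injective (ha.trans hb.symm)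
    have := (S.orderIsoOfFin rfl).symm.injective this
    exact congrArg Subtype.val (this : (⟨a, h1⟩ : {x // x ∈ S}) = ⟨b, h2⟩)
  · intro a b x y hab ha hb
    rw [mkf] at ha hb
    split_ifs at ha hb with h1 h2
    rw [Option.some_inj] at ha hb
    subst ha; subst hb
    exact (S'.orderEmbOfFin hc).strictMono
      ((S.orderIsoOfFin rfl).symm.strictMono (show (⟨a, h1⟩ : {x // x ∈ S}) < ⟨b, h2⟩ from hab))
  · intro a x ha
    rw [mkf] at ha
    split_ifs at ha with h1
    rw [Option.some_inj] at ha
    subst ha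
    set i := (S.orderIsoOfFin rfl).symm ⟨a, h1⟩ with hi
    have h2 : (i : ℕ) < S'.card := by rw [hc]; exact i.2
    have e1 : S'.orderEmbOfFin hc i = S'.orderEmbOfFin rfl ⟨i, h2⟩ := rfl
    have e2 : S.orderEmbOfFin rfl i = a := index_spec S h1
    calc S'.orderEmbOfFin hc i = S'.orderEmbOfFin rfl ⟨i, h2⟩ := e1
      _ ≤ S.orderEmbOfFin rfl ⟨(i:ℕ), i.2⟩ := hle.2 i h2 i.2
      _ = a := by rw [show (⟨(i:ℕ), i.2⟩ : Fin S.card) = i from rfl]; exact e2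

lemma fimg_mkf {S S' : Finset (Fin n)} (hc : S'.card = S.card) :
    fimg (mkf S S' hc) S = S' := by
  ext x
  rw [mem_fimg]
  constructor
  · rintro ⟨a, ha, hfa⟩
    rw [mkf, dif_pos ha, Option.some_inj] at hfa
    rw [← hfa]
    exact S'.orderEmbOfFin_mem hc _
  · intro hx
    have : x ∈ Set.range (S'.orderEmbOfFin hc) := by
      rw [S'.range_orderEmbOfFin hc]; exact hx
    obtain ⟨i, hi⟩ := this
    exact ⟨S.orderEmbOfFin rfl i, S.orderEmbOfFin_mem rfl i, by rw [mkf_apply_mem, hi]⟩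

lemma mem_domf {f : Fin n → Option (Fin n)} {a : Fin n} : a ∈ domf f ↔ (f a).isSome := by
  simp [domf]

/-- uniqueness: any f ∈ Bn with domain S and image S' equals mkf. -/
lemma eq_mkf {S S' : Finset (Fin n)} (hc : S'.card = S.card)
    {f : Fin n → Option (Fin n)} (hf : f ∈ Bn n) (hdom : domf f = S) (himg : fimg f S = S') :
    f = mkf S S' hc := by
  obtain ⟨hinj, hpres, hdec⟩ := hf
  have hsome : ∀ a ∈ S, (f a).isSome := by
    intro a ha; rw [← mem_domf, hdom]; exact ha
  set g : Fin S.card → Fin n := fun i =>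
    (f (S.orderEmbOfFin rfl i)).get (hsome _ (S.orderEmbOfFin_mem rfl i)) with hg
  have hgsome : ∀ i, f (S.orderEmbOfFin rfl i) = some (g i) := by
    intro i; rw [hg]; simp
  have hgmono : StrictMono g := by
    intro i j hij
    exact hpres _ _ _ _ ((S.orderEmbOfFin rfl).strictMono hij) (hgsome i) (hgsome j)
  have hgmem : ∀ i, g i ∈ S' := by
    intro i
    rw [← himg, mem_fimg]
    exact ⟨S.orderEmbOfFin rfl i, S.orderEmbOfFin_mem rfl i, hgsome i⟩
  have hge : g = S'.orderEmbOfFin hc := orderEmbOfFin_unique hc hgmem hgmono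
  funext a
  by_cases ha : a ∈ S
  · have hidx := index_spec S ha
    set i := (S.orderIsoOfFin rfl).symm ⟨a, ha⟩ with hi
    rw [mkf, dif_pos ha]
    conv_lhs => rw [← hidx]
    rw [hgsome i, hge]
  · have : ¬ (f a).isSome := by rw [← mem_domf, hdom]; exact ha
    rw [mkf, dif_neg ha]
    exact Option.not_isSome_iff_eq_none.mp this

/-- action decreases: f ∈ Bn, T ⊆ domf f → subLE (fimg f T) T. -/
lemma subLE_fimg {f : Fin n → Option (Fin n)} (hf : f ∈ Bn n) {T : Finset (Fin n)}
    (hT : T ⊆ domf f) : subLE (fimg f T) T := by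
  obtain ⟨hinj, hpres, hdec⟩ := hf
  have hsome : ∀ a ∈ T, (f a).isSome := by
    intro a ha; rw [← mem_domf]; exact hT ha
  set g : Fin T.card → Fin n := fun i =>
    (f (T.orderEmbOfFin rfl i)).get (hsome _ (T.orderEmbOfFin_mem rfl i)) with hg
  have hgsome : ∀ i, f (T.orderEmbOfFin rfl i) = some (g i) := by
    intro i; rw [hg]; simp
  have hgmono : StrictMono g := fun i j hij =>
    hpres _ _ _ _ ((T.orderEmbOfFin rfl).strictMono hij) (hgsome i) (hgsome j)
  have himg : fimg f T = Finset.image g Finset.univ := by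
    ext x
    rw [mem_fimg, Finset.mem_image]
    constructor
    · rintro ⟨a, ha, hfa⟩
      have : a ∈ Set.range (T.orderEmbOfFin rfl) := by rw [T.range_orderEmbOfFin rfl]; exact ha
      obtain ⟨i, hi⟩ := this
      refine ⟨i, Finset.mem_univ i, ?_⟩
      have := hgsome i
      rw [hi, hfa, Option.some_inj] at this
      exact this.symm
    · rintro ⟨i, _, hi⟩
      exact ⟨T.orderEmbOfFin rfl i, T.orderEmbOfFin_mem rfl i, hi ▸ hgsome i⟩
  have hcard : (fimg f T).card = T.card := by
    rw [himg, Finset.card_image_of_injective _ hgmono.injective, Finset.card_univ,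
      Fintype.card_fin]
  have hgmem : ∀ i, g i ∈ fimg f T := by
    intro i; rw [mem_fimg]; exact ⟨T.orderEmbOfFin rfl i, T.orderEmbOfFin_mem rfl i, hgsome i⟩
  have hge : g = (fimg f T).orderEmbOfFin hcard := orderEmbOfFin_unique hcard hgmem hgmono
  refine ⟨hcard, fun i h1 h2 => ?_⟩
  show ((fimg f T).orderEmbOfFin rfl ⟨i, h1⟩ : Fin n) ≤ T.orderEmbOfFin rfl ⟨i, h2⟩
  have e1 : (fimg f T).orderEmbOfFin rfl ⟨i, h1⟩ =
      (fimg f T).orderEmbOfFin hcard ⟨i, h2⟩ := rfl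
  rw [e1, ← hge]
  exact hdec _ _ (hgsome ⟨i, h2⟩)

lemma actMap_single (F : Type*) [Field F] (f : Fin n → Option (Fin n)) (T : Finset (Fin n)) :
    actMap F f (Finsupp.single T (1 : F)) =
      if T ⊆ domf f then Finsupp.single (fimg f T) (1 : F) else 0 := by
  rw [actMap, Finsupp.lsum_apply, Finsupp.sum_single_index (by simp)]
  split_ifs with h <;> simp

end Aux


/-- Subsets `S' ≤ S` correspond to a unique `f ∈ B_n` with `D(f) = S`, `R(f) = S'`;
consequently `B_n · v_S` is the span of the `v_{S'}` with `S'` a subset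
of the same size satisfying `S' ≤ S` componentwise. -/
theorem genMod_single_eq_span (n : ℕ) (F : Type*) [Field F] [CharZero F]
    (S : Finset (Fin n)) :
    (∀ S' : Finset (Fin n), subLE S' S →
      ∃! f : Fin n → Option (Fin n), f ∈ Bn n ∧ domf f = S ∧ fimg f S = S') ∧
    genMod F (Finsupp.single S (1 : F)) =
      Submodule.span F {w | ∃ S' : Finset (Fin n), subLE S' S ∧ w = Finsupp.single S' (1 : F)} := by
  have part1 : ∀ S' : Finset (Fin n), subLE S' S →
      ∃! f : Fin n → Option (Fin n), f ∈ Bn n ∧ domf f = S ∧ fimg f S = S' := by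
    intro S' hle
    refine ⟨mkf S S' hle.1, ⟨mkf_mem_Bn hle.1 hle, domf_mkf S S' hle.1, fimg_mkf hle.1⟩, ?_⟩
    rintro g ⟨hg, hgd, hgi⟩
    exact eq_mkf hle.1 hg hgd hgi
  refine ⟨part1, ?_⟩
  set Gen : Set (Finset (Fin n) →₀ F) :=
    {w | ∃ S' : Finset (Fin n), subLE S' S ∧ w = Finsupp.single S' (1 : F)} with hGen
  apply le_antisymm
  · -- genMod ≤ span
    apply sInf_le
    constructor
    · -- span is BnSub
      intro f hf v hv
      have : actMap F f v ∈ Submodule.map (actMap F f) (Submodule.span F Gen) :=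
        Submodule.mem_map_of_mem hv
      rw [Submodule.map_span] at this
      refine Submodule.span_le.mpr ?_ this
      rintro w ⟨u, ⟨S', hS', rfl⟩, rfl⟩
      rw [SetLike.mem_coe, actMap_single]
      split_ifs with h
      · exact Submodule.subset_span ⟨fimg f S', subLE_trans (subLE_fimg hf h) hS', rfl⟩
      · exact Submodule.zero_mem _
    · exact Submodule.subset_span ⟨S, subLE_refl S, rfl⟩
  · -- span ≤ genMod
    rw [Submodule.span_le]
    rintro w ⟨S', hS', rfl⟩
    rw [SetLike.mem_coe, genMod, Submodule.mem_sInf]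
    rintro W ⟨hW, hvW⟩
    have hact := hW (mkf S S' hS'.1) (mkf_mem_Bn hS'.1 hS') _ hvW
    rw [actMap_single, domf_mkf, if_pos (Finset.Subset.refl S), fimg_mkf] at hact
    exact hact
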